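/- arXiv:2411.19623 — 3 statements merged into one kernel-verified Lean document; each statement's English description precedes it below -/
import Mathlib

section
/- Let E be a real vector space, let Y and A be nonempty finite index sets, let μ : Y → A → E, let s : Y → E, and for each y ∈ Y let r_y : A → ℝ satisfy r_y(a) ≥ 0 for all a and ∑_{a ∈ A} r_y(a) = 1. Let D : E → E → ℝ be nonnegative and convex in its first argument for every fixed second argument. Then for every ε ≥ 0, if the FairDD objective satisfies ∑_{y ∈ Y} ∑_{a ∈ A} D(μ(y,a), s(y)) ≤ ε, then the vanilla objective satisfies 0 ≤ ∑_{y ∈ Y} D(∑_{a ∈ A} r_y(a) • μ(y,a), s(y)) ≤ ε; in particular, minimizing the FairDD objective controls the vanilla objective. -/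
/-- Minimizing the FairDD objective controls the vanilla objective: if the
FairDD objective is at most `ε`, then the vanilla objective is between `0`
and `ε`. -/
theorem fairdd_controls_vanilla
    {E : Type*} [AddCommGroup E] [Module ℝ E]
    {Y A : Type*} [Fintype Y] [Fintype A] [Nonempty Y] [Nonempty A]
    (μ : Y → A → E) (s : Y → E) (r : Y → A → ℝ)
    (hr_nonneg : ∀ y a, 0 ≤ r y a) (hr_sum : ∀ y, ∑ a, r y a = 1)
    (D : E → E → ℝ)
    (hD_nonneg : ∀ u v, 0 ≤ D u v)
    (hD_convex : ∀ v : E, ConvexOn ℝ Set.univ (fun u => D u v)) :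
    ∀ ε : ℝ, 0 ≤ ε →
      (∑ y, ∑ a, D (μ y a) (s y)) ≤ ε →
      0 ≤ ∑ y, D (∑ a, r y a • μ y a) (s y) ∧
        ∑ y, D (∑ a, r y a • μ y a) (s y) ≤ ε := by
  intro ε hε hfair
  constructor
  · exact Finset.sum_nonneg fun y _ => hD_nonneg _ _
  · calc ∑ y, D (∑ a, r y a • μ y a) (s y)
        ≤ ∑ y, ∑ a, r y a * D (μ y a) (s y) := by
          refine Finset.sum_le_sum fun y _ => ?_
          have := (hD_convex (s y)).map_sum_le (t := Finset.univ)
            (fun a _ => hr_nonneg y a) (hr_sum y) (fun a _ => Set.mem_univ (μ y a))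
          simpa using this
      _ ≤ ∑ y, ∑ a, D (μ y a) (s y) := by
          refine Finset.sum_le_sum fun y _ => Finset.sum_le_sum fun a _ => ?_
          have h1 : r y a ≤ 1 := by
            have := Finset.single_le_sum (f := r y) (fun b _ => hr_nonneg y b)
              (Finset.mem_univ a)
            linarith [hr_sum y]
          nlinarith [hD_nonneg (μ y a) (s y), hr_nonneg y a]
      _ ≤ ε := hfair
end

section
/- Let E be a real inner product space, let Y and A be nonempty finite index sets, let μ : Y → A → E, let s : Y → E, and for each y ∈ Y let r_y : A → ℝ satisfy r_y(a) ≥ 0 for all a and ∑_{a ∈ A} r_y(a) = 1. Then ∑_{y ∈ Y} ‖(∑_{a ∈ A} r_y(a) • μ(y,a)) − s(y)‖² ≤ ∑_{y ∈ Y} ∑_{a ∈ A} ‖μ(y,a) − s(y)‖²; that is, with the MSE distance D(u,v) = ‖u − v‖², the FairDD objective upper-bounds the vanilla matching objective. -/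
/-- With the MSE distance `D(u,v) = ‖u - v‖²`, the FairDD objective
upper-bounds the vanilla matching objective. -/
theorem fairdd_upper_bound_vanilla_mse
    {E : Type*} [NormedAddCommGroup E] [InnerProductSpace ℝ E]
    {Y A : Type*} [Fintype Y] [Fintype A] [Nonempty Y] [Nonempty A]
    (μ : Y → A → E) (s : Y → E) (r : Y → A → ℝ)
    (hr_nonneg : ∀ y a, 0 ≤ r y a) (hr_sum : ∀ y, ∑ a, r y a = 1) :
    ∑ y, ‖(∑ a, r y a • μ y a) - s y‖ ^ 2 ≤
      ∑ y, ∑ a, ‖μ y a - s y‖ ^ 2 := by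
  apply Finset.sum_le_sum
  intro y _
  have hdiff : (∑ a, r y a • μ y a) - s y = ∑ a, r y a • (μ y a - s y) := by
    simp [smul_sub, Finset.sum_sub_distrib, ← Finset.sum_smul, hr_sum y]
  rw [hdiff]
  have h1 : ‖∑ a, r y a • (μ y a - s y)‖ ≤ ∑ a, r y a * ‖μ y a - s y‖ := by
    refine (norm_sum_le _ _).trans (le_of_eq ?_)
    refine Finset.sum_congr rfl fun a _ => ?_
    rw [norm_smul, Real.norm_eq_abs, abs_of_nonneg (hr_nonneg y a)]
  have h2 : (∑ a, r y a * ‖μ y a - s y‖) ^ 2 ≤ ∑ a, r y a * ‖μ y a - s y‖ ^ 2 := by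
    have := Finset.sum_mul_sq_le_sq_mul_sq Finset.univ
      (fun a => Real.sqrt (r y a)) (fun a => Real.sqrt (r y a) * ‖μ y a - s y‖)
    calc (∑ a, r y a * ‖μ y a - s y‖) ^ 2
        = (∑ a, Real.sqrt (r y a) * (Real.sqrt (r y a) * ‖μ y a - s y‖)) ^ 2 := by
          congr 1
          refine Finset.sum_congr rfl fun a _ => ?_
          rw [← mul_assoc, Real.mul_self_sqrt (hr_nonneg y a)]
      _ ≤ (∑ a, Real.sqrt (r y a) ^ 2) * (∑ a, (Real.sqrt (r y a) * ‖μ y a - s y‖) ^ 2) := by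
          exact Finset.sum_mul_sq_le_sq_mul_sq Finset.univ _ _
      _ = ∑ a, r y a * ‖μ y a - s y‖ ^ 2 := by
          have : (∑ a, Real.sqrt (r y a) ^ 2) = 1 := by
            rw [← hr_sum y]
            exact Finset.sum_congr rfl fun a _ => Real.sq_sqrt (hr_nonneg y a)
          rw [this, one_mul]
          refine Finset.sum_congr rfl fun a _ => ?_
          rw [mul_pow, Real.sq_sqrt (hr_nonneg y a)]
  have h3 : ∑ a, r y a * ‖μ y a - s y‖ ^ 2 ≤ ∑ a, ‖μ y a - s y‖ ^ 2 := by
    refine Finset.sum_le_sum fun a _ => ?_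
    have hr1 : r y a ≤ 1 := by
      rw [← hr_sum y]
      exact Finset.single_le_sum (fun i _ => hr_nonneg y i) (Finset.mem_univ a)
    nlinarith [sq_nonneg ‖μ y a - s y‖]
  calc ‖∑ a, r y a • (μ y a - s y)‖ ^ 2
      ≤ (∑ a, r y a * ‖μ y a - s y‖) ^ 2 := by
        apply pow_le_pow_left₀ (norm_nonneg _) h1
    _ ≤ ∑ a, r y a * ‖μ y a - s y‖ ^ 2 := h2
    _ ≤ ∑ a, ‖μ y a - s y‖ ^ 2 := h3
end

section
/- Let E be a real inner product space, let A be a nonempty finite index set, and let μ : A → E satisfy ‖μ(a)‖ = 1 for every a ∈ A. Assume ∑_{a ∈ A} μ(a) ≠ 0 and set s* = (∑_{a ∈ A} μ(a)) / ‖∑_{a ∈ A} μ(a)‖. Then for every s ∈ E with ‖s‖ = 1, ∑_{a ∈ A} (1 − ⟪μ(a), s⟫) ≥ ∑_{a ∈ A} (1 − ⟪μ(a), s*⟫), with equality if and only if s = s*. In particular, over unit vectors s, the FairDD per-class cosine objective ∑_{a ∈ A} (1 − ⟪μ(a), s⟫/(‖μ(a)‖·‖s‖)) is uniquely minimized at the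 normalized mean of the group signals, a positive scalar multiple of (1/|A|) ∑_{a ∈ A} μ(a). -/
open RealInnerProductSpace

/-- Theorem 4.1 (cosine case): over unit vectors, the FairDD per-class cosine
objective is uniquely minimized at the normalized mean of the (unit) group
signals, which is a positive scalar multiple of the arithmetic mean. -/
theorem fairdd_cosine_optimum
    {E : Type*} [NormedAddCommGroup E] [InnerProductSpace ℝ E]
    {A : Type*} [Fintype A] [Nonempty A]
    (μ : A → E) (hμ : ∀ a, ‖μ a‖ = 1)
    (hsum : (∑ a, μ a) ≠ 0) :
    (∀ s : E, ‖s‖ = 1 →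
      (∑ a, (1 - ⟪μ a, ‖∑ a, μ a‖⁻¹ • ∑ a, μ a⟫) ≤ ∑ a, (1 - ⟪μ a, s⟫)) ∧
      ((∑ a, (1 - ⟪μ a, s⟫) = ∑ a, (1 - ⟪μ a, ‖∑ a, μ a‖⁻¹ • ∑ a, μ a⟫)) ↔
        s = ‖∑ a, μ a‖⁻¹ • ∑ a, μ a)) ∧
    ∃ c : ℝ, 0 < c ∧
      (‖∑ a, μ a‖⁻¹ • ∑ a, μ a) = c • ((Fintype.card A : ℝ)⁻¹ • ∑ a, μ a) := by
  set m : E := ∑ a, μ a with hm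
  have hmn : ‖m‖ ≠ 0 := norm_ne_zero_iff.mpr hsum
  have hmpos : (0:ℝ) < ‖m‖ := norm_pos_iff.mpr hsum
  have hsum_eq : ∀ t : E, ∑ a, (1 - ⟪μ a, t⟫) = (Fintype.card A : ℝ) - ⟪m, t⟫ := by
    intro t
    rw [Finset.sum_sub_distrib, Finset.sum_const, hm, sum_inner]
    simp [mul_comm]
  have hstar : ⟪m, ‖m‖⁻¹ • m⟫ = ‖m‖ := by
    rw [real_inner_smul_right, real_inner_self_eq_norm_sq]
    field_simp
  have key : ∀ s : E, ‖s‖ = 1 → (⟪m, s⟫ ≤ ‖m‖ ∧ (⟪m, s⟫ = ‖m‖ ↔ s = ‖m‖⁻¹ • m)) := by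
    intro s hs
    constructor
    · have := real_inner_le_norm m s
      rwa [hs, mul_one] at this
    · constructor
      · intro h
        have h2 : ⟪m, s⟫ = ‖m‖ * ‖s‖ := by rw [hs, mul_one]; exact h
        have h3 := inner_eq_norm_mul_iff_real.mp h2
        rw [hs, one_smul] at h3
        have h4 : s = ‖m‖⁻¹ • (‖m‖ • s) := by
          rw [smul_smul, inv_mul_cancel₀ hmn, one_smul]
        rw [h4, ← h3]
      · intro h
        rw [h]; exact hstar
  constructor
  · intro s hs
    obtain ⟨hle, hiff⟩ := key s hs
    constructor
    · rw [hsum_eq, hsum_eq, hstar]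
      linarith
    · rw [hsum_eq, hsum_eq, hstar]
      constructor
      · intro h
        exact hiff.mp (by linarith)
      · intro h
        rw [hiff.mpr h]
  · refine ⟨(Fintype.card A : ℝ) / ‖m‖, by positivity, ?_⟩
    rw [smul_smul]
    congr 1
    field_simp
end
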